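/- arXiv:2310.15607 — 6 statements merged into one kernel-verified Lean document; each statement's English description precedes it below -/
import Mathlib

section
/- Let T : E ⇉ E be maximal monotone on a finite-dimensional inner product space E, α > 0, and B : E → E symmetric positive semidefinite. Then the operator Φ(Z, Y) = (αT(Z) + BY, −BZ) on E × E is maximal monotone, i.e., I + Φ is surjective. -/
/-!
The operator `Φ` is `(αT × 0) + L` with `L (Z, Y) = (B Y, -B Z)`, and `⟪p, L p⟫ = 0` because `B`
is symmetric. Positive multiples, products and such skew perturbations of maximal monotone
operators are maximal monotone, so the claim is Minty's theorem for `Φ`.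

Minty's theorem in finite dimensions comes from the Fitzpatrick function
`F (x, u) = sup_{v ∈ S y} ⟪x, v⟫ + ⟪y, u⟫ - ⟪y, v⟫`, which is convex, lower semicontinuous and,
for maximal monotone `S`, bounded below by `⟪x, u⟫`. The coercive function
`F (x, u) + (‖x‖² + ‖u‖²) / 2` attains its minimum at some `(x, u)`; the first-order condition
there, together with `⟪x, u⟫ ≤ F (x, u)`, gives `‖x + u‖² ≤ ⟪y + u, v + x⟫` for every `v ∈ S y`.
By maximality `-x ∈ S (-u)`, and testing with this point gives `x + u = 0`.
-/

open RealInnerProductSpace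

/-- A set-valued operator on a real inner product space is monotone. -/
def MonoOp {H : Type*} [NormedAddCommGroup H] [InnerProductSpace ℝ H]
    (T : H → Set H) : Prop :=
  ∀ x y u v, u ∈ T x → v ∈ T y → 0 ≤ ⟪x - y, u - v⟫

/-- A set-valued operator is maximal monotone. -/
def MaxMonoOp {H : Type*} [NormedAddCommGroup H] [InnerProductSpace ℝ H]
    (T : H → Set H) : Prop :=
  MonoOp T ∧ ∀ T' : H → Set H, MonoOp T' → (∀ x, T x ⊆ T' x) → ∀ x, T' x = T x

open Filter Topology
open scoped Pointwise

section Monotone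

variable {H : Type*} [NormedAddCommGroup H] [InnerProductSpace ℝ H] {S : H → Set H}

theorem maxMonoOp_iff : MaxMonoOp S ↔
    MonoOp S ∧ ∀ a b, (∀ y v, v ∈ S y → 0 ≤ ⟪a - y, b - v⟫) → b ∈ S a := by
  refine ⟨fun hS => ⟨hS.1, fun a b hab => ?_⟩,
    fun ⟨hmono, hmax⟩ => ⟨hmono, fun S' hS' hsub x => ?_⟩⟩
  · let S' : H → Set H := fun x => S x ∪ {w | x = a ∧ w = b}
    have hS' : MonoOp S' := by
      rintro x y u v (hu | ⟨rfl, rfl⟩) (hv | ⟨rfl, rfl⟩)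
      · exact hS.1 x y u v hu hv
      · rw [← inner_neg_neg, neg_sub, neg_sub]
        exact hab x u hu
      · exact hab y v hv
      · simp
    rw [← hS.2 S' hS' (fun x => Set.subset_union_left) a]
    exact Or.inr ⟨rfl, rfl⟩
  · exact Set.Subset.antisymm
      (fun u hu => hmax x u fun y v hv => hS' x y u v hu (hsub y hv)) (hsub x)

theorem MaxMonoOp.mem_of_forall_inner_nonneg (hS : MaxMonoOp S) {a b : H}
    (h : ∀ y v, v ∈ S y → 0 ≤ ⟪a - y, b - v⟫) : b ∈ S a :=
  (maxMonoOp_iff.1 hS).2 a b h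

theorem MaxMonoOp.exists_mem (hS : MaxMonoOp S) : ∃ y v, v ∈ S y := by
  by_contra! h
  exact h 0 0 (hS.mem_of_forall_inner_nonneg fun y v hv => (h y v hv).elim)

theorem MaxMonoOp.add_skew (hS : MaxMonoOp S) {L : H → H}
    (hL : ∀ x y, ⟪x - y, L x - L y⟫ = 0) : MaxMonoOp (fun x => {w | w - L x ∈ S x}) := by
  have split : ∀ x y u v : H, ⟪x - y, u - v⟫ = ⟪x - y, (u - L x) - (v - L y)⟫ := by
    intro x y u v
    rw [show u - v = (u - L x - (v - L y)) + (L x - L y) by abel, inner_add_right, hL, add_zero]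
  refine maxMonoOp_iff.2 ⟨fun x y u v hu hv => (split x y u v).symm ▸ hS.1 x y _ _ hu hv,
    fun a b hab => hS.mem_of_forall_inner_nonneg fun y v hv => ?_⟩
  have := hab y (v + L y) (by simpa using hv)
  rwa [split, add_sub_cancel_right] at this

theorem maxMonoOp_zero : MaxMonoOp (fun _ : H => ({0} : Set H)) := by
  refine maxMonoOp_iff.2 ⟨fun x y u v hu hv => by simp_all, fun a b hab => ?_⟩
  have := hab (a + b) 0 rfl
  rw [sub_add_cancel_left, sub_zero, inner_neg_left, real_inner_self_eq_norm_sq] at this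
  simpa using this

theorem MaxMonoOp.smul (hS : MaxMonoOp S) {c : ℝ} (hc : 0 < c) :
    MaxMonoOp (fun x => c • S x) := by
  refine maxMonoOp_iff.2 ⟨?_, fun a b hab => ⟨c⁻¹ • b, ?_, smul_inv_smul₀ hc.ne' b⟩⟩
  · rintro x y _ _ ⟨u, hu, rfl⟩ ⟨v, hv, rfl⟩
    rw [← smul_sub, real_inner_smul_right]
    exact mul_nonneg hc.le (hS.1 x y u v hu hv)
  · refine hS.mem_of_forall_inner_nonneg fun y v hv => ?_
    have := hab y (c • v) (Set.smul_mem_smul_set hv)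
    rw [← smul_inv_smul₀ hc.ne' b, ← smul_sub, real_inner_smul_right] at this
    exact nonneg_of_mul_nonneg_right this hc

end Monotone

section Energy

variable {H : Type*} [NormedAddCommGroup H]

noncomputable def epigraphEnergy (p : H × H × ℝ) : ℝ :=
  p.2.2 + (‖p.1‖ ^ 2 + ‖p.2.1‖ ^ 2) / 2

theorem continuous_epigraphEnergy : Continuous (epigraphEnergy (H := H)) := by
  unfold epigraphEnergy
  fun_prop

end Energy

section Fitzpatrick

variable {H : Type*} [NormedAddCommGroup H] [InnerProductSpace ℝ H] {S : H → Set H}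

/-- The epigraph of the Fitzpatrick function `F(x, u) = sup_{v ∈ S y} ⟪x, v⟫ + ⟪y, u⟫ - ⟪y, v⟫`,
which may take the value `+∞`. -/
def fitzpatrickEpigraph (S : H → Set H) : Set (H × H × ℝ) :=
  {p | ∀ y v, v ∈ S y → ⟪p.1, v⟫ + ⟪y, p.2.1⟫ - ⟪y, v⟫ ≤ p.2.2}

theorem convex_fitzpatrickEpigraph : Convex ℝ (fitzpatrickEpigraph S) := by
  intro p hp q hq a b ha hb hab y v hv
  simp only [Prod.fst_add, Prod.smul_fst, Prod.snd_add, Prod.smul_snd, inner_add_left,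
    inner_add_right, real_inner_smul_left, real_inner_smul_right, smul_eq_mul]
  linear_combination a * hp y v hv + b * hq y v hv + ⟪y, v⟫ * hab

theorem isClosed_fitzpatrickEpigraph : IsClosed (fitzpatrickEpigraph S) := by
  simp only [fitzpatrickEpigraph, Set.ofPred_forall]
  exact isClosed_iInter fun y => isClosed_iInter fun v => isClosed_iInter fun _ =>
    isClosed_le (by fun_prop) (by fun_prop)

theorem MonoOp.mem_fitzpatrickEpigraph (hS : MonoOp S) {y v : H} (hv : v ∈ S y) :
    (y, v, ⟪y, v⟫) ∈ fitzpatrickEpigraph S := by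
  intro y' v' hv'
  have := hS y y' v v' hv hv'
  simp only [inner_sub_left, inner_sub_right] at this
  linarith

theorem MaxMonoOp.inner_le_of_mem_fitzpatrickEpigraph (hS : MaxMonoOp S) {p : H × H × ℝ}
    (hp : p ∈ fitzpatrickEpigraph S) : ⟪p.1, p.2.1⟫ ≤ p.2.2 := by
  by_contra! h
  have hmem : p.2.1 ∈ S p.1 := hS.mem_of_forall_inner_nonneg fun y v hv => by
    have := hp y v hv
    simp only [inner_sub_left, inner_sub_right]
    linarith [real_inner_comm y p.2.1]
  linarith [hp _ _ hmem]

theorem sq_norm_add_le_epigraphEnergy {y₀ v₀ : H} (h₀ : v₀ ∈ S y₀) {p : H × H × ℝ}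
    (hp : p ∈ fitzpatrickEpigraph S) :
    (‖p.1 + v₀‖ ^ 2 + ‖p.2.1 + y₀‖ ^ 2 - ‖y₀ + v₀‖ ^ 2) / 2 ≤ epigraphEnergy p := by
  have := hp y₀ v₀ h₀
  simp only [epigraphEnergy, norm_add_sq_real]
  linarith [real_inner_comm y₀ p.2.1]

theorem isCompact_fitzpatrickEpigraph_inter_epigraphEnergy_le [FiniteDimensional ℝ H]
    {y₀ v₀ : H} (h₀ : v₀ ∈ S y₀) (M : ℝ) :
    IsCompact (fitzpatrickEpigraph S ∩ {p | epigraphEnergy p ≤ M}) := by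
  set D := ‖y₀ + v₀‖ ^ 2 / 2 with hD
  set R := √(2 * (M + D)) + ‖y₀‖ + ‖v₀‖ with hR
  refine IsCompact.of_isClosed_subset ((isCompact_closedBall (0 : H) R).prod
      ((isCompact_closedBall (0 : H) R).prod (isCompact_Icc (a := -D - R ^ 2) (b := M))))
    (isClosed_fitzpatrickEpigraph.inter (isClosed_le continuous_epigraphEnergy continuous_const))
    ?_
  rintro ⟨x, u, t⟩ ⟨hp, hM⟩
  have hlow := sq_norm_add_le_epigraphEnergy h₀ hp
  simp only [Set.mem_ofPred_eq, epigraphEnergy] at hM hlow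
  have hx : ‖x + v₀‖ ≤ √(2 * (M + D)) :=
    Real.le_sqrt_of_sq_le (by linarith [sq_nonneg ‖u + y₀‖])
  have hu : ‖u + y₀‖ ≤ √(2 * (M + D)) :=
    Real.le_sqrt_of_sq_le (by linarith [sq_nonneg ‖x + v₀‖])
  have hxR : ‖x‖ ≤ R := by
    have := norm_sub_le (x + v₀) v₀
    rw [add_sub_cancel_right] at this
    linarith [norm_nonneg y₀]
  have huR : ‖u‖ ≤ R := by
    have := norm_sub_le (u + y₀) y₀
    rw [add_sub_cancel_right] at this
    linarith [norm_nonneg v₀]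
  refine ⟨mem_closedBall_zero_iff.2 hxR, mem_closedBall_zero_iff.2 huR, ?_, ?_⟩
  · nlinarith [norm_nonneg x, norm_nonneg u]
  · nlinarith [norm_nonneg x, norm_nonneg u]

theorem exists_isMinOn_epigraphEnergy [FiniteDimensional ℝ H] (hS : MonoOp S) {y₀ v₀ : H}
    (h₀ : v₀ ∈ S y₀) :
    ∃ p ∈ fitzpatrickEpigraph S, IsMinOn epigraphEnergy (fitzpatrickEpigraph S) p := by
  set p₀ : H × H × ℝ := (y₀, v₀, ⟪y₀, v₀⟫)
  have hp₀ : p₀ ∈ fitzpatrickEpigraph S := hS.mem_fitzpatrickEpigraph h₀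
  have hp₀' : p₀ ∈ fitzpatrickEpigraph S ∩ {p | epigraphEnergy p ≤ epigraphEnergy p₀} :=
    ⟨hp₀, le_refl (epigraphEnergy p₀)⟩
  obtain ⟨p, ⟨hp, -⟩, hmin⟩ :=
    (isCompact_fitzpatrickEpigraph_inter_epigraphEnergy_le h₀ _).exists_isMinOn ⟨p₀, hp₀'⟩
      continuous_epigraphEnergy.continuousOn
  refine ⟨p, hp, fun q hq => ?_⟩
  by_cases hle : epigraphEnergy q ≤ epigraphEnergy p₀
  · exact hmin ⟨hq, hle⟩
  · exact (hmin hp₀').trans (le_of_not_ge hle)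

theorem IsMinOn.epigraphEnergy_directional_nonneg {C : Set (H × H × ℝ)} (hC : Convex ℝ C)
    {p q : H × H × ℝ} (hp : p ∈ C) (hmin : IsMinOn epigraphEnergy C p) (hq : q ∈ C) :
    0 ≤ q.2.2 - p.2.2 + ⟪p.1, q.1 - p.1⟫ + ⟪p.2.1, q.2.1 - p.2.1⟫ := by
  set A := q.2.2 - p.2.2 + ⟪p.1, q.1 - p.1⟫ + ⟪p.2.1, q.2.1 - p.2.1⟫
  set B := ‖q.1 - p.1‖ ^ 2 + ‖q.2.1 - p.2.1‖ ^ 2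
  have hstep : ∀ τ ∈ Set.Ioc (0 : ℝ) 1, 0 ≤ A + τ * B / 2 := by
    rintro τ ⟨hτ, hτ1⟩
    have hle : epigraphEnergy p ≤ epigraphEnergy (p + τ • (q - p)) :=
      hmin (hC.add_smul_sub_mem hp hq ⟨hτ.le, hτ1⟩)
    have hexpand :
        epigraphEnergy (p + τ • (q - p)) = epigraphEnergy p + τ * (A + τ * B / 2) := by
      simp only [epigraphEnergy, Prod.fst_add, Prod.snd_add, Prod.smul_fst, Prod.smul_snd,
        Prod.fst_sub, Prod.snd_sub, norm_add_sq_real, norm_smul, real_inner_smul_right,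
        Real.norm_eq_abs, abs_of_pos hτ, smul_eq_mul, A, B]
      ring
    rw [hexpand] at hle
    exact (mul_nonneg_iff_of_pos_left hτ).1 (by linarith)
  have hlim : Tendsto (fun τ : ℝ => A + τ * B / 2) (𝓝[>] 0) (𝓝 A) := by
    have : Tendsto (fun τ : ℝ => A + τ * B / 2) (𝓝 0) (𝓝 (A + 0 * B / 2)) :=
      Continuous.tendsto (by fun_prop) 0
    simpa using this.mono_left nhdsWithin_le_nhds
  exact ge_of_tendsto hlim (eventually_of_mem (Ioc_mem_nhdsGT one_pos) hstep)

theorem MaxMonoOp.exists_sq_norm_add_le_inner [FiniteDimensional ℝ H] (hS : MaxMonoOp S) :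
    ∃ a b, ∀ y v, v ∈ S y → ‖a + b‖ ^ 2 ≤ ⟪y - a, v - b⟫ := by
  obtain ⟨y₀, v₀, h₀⟩ := hS.exists_mem
  obtain ⟨⟨x, u, t⟩, hp, hmin⟩ := exists_isMinOn_epigraphEnergy hS.1 h₀
  refine ⟨-u, -x, fun y v hv => ?_⟩
  have hdir := hmin.epigraphEnergy_directional_nonneg convex_fitzpatrickEpigraph hp
    (hS.1.mem_fitzpatrickEpigraph hv)
  have hFitz := hS.inner_le_of_mem_fitzpatrickEpigraph hp
  simp only [sub_neg_eq_add, ← neg_add, norm_neg, norm_add_sq_real, inner_add_left,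
    inner_add_right, inner_sub_right, real_inner_self_eq_norm_sq] at hdir hFitz ⊢
  linarith [real_inner_comm x u, real_inner_comm x y, real_inner_comm u v]

theorem MaxMonoOp.exists_add_eq_zero [FiniteDimensional ℝ H] (hS : MaxMonoOp S) :
    ∃ x u, u ∈ S x ∧ x + u = 0 := by
  obtain ⟨a, b, hab⟩ := hS.exists_sq_norm_add_le_inner
  have hb : b ∈ S a := hS.mem_of_forall_inner_nonneg fun y v hv => by
    rw [← inner_neg_neg, neg_sub, neg_sub]
    exact (sq_nonneg _).trans (hab y v hv)
  refine ⟨a, b, hb, ?_⟩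
  have := hab a b hb
  rw [sub_self, inner_zero_left] at this
  exact norm_eq_zero.1 (pow_eq_zero_iff two_ne_zero |>.1 (le_antisymm this (sq_nonneg _)))

theorem MaxMonoOp.exists_add_eq [FiniteDimensional ℝ H] (hS : MaxMonoOp S) (w : H) :
    ∃ x u, u ∈ S x ∧ x + u = w := by
  obtain ⟨x, u, hu, hxu⟩ := (hS.add_skew (L := fun _ => -w) (by simp)).exists_add_eq_zero
  refine ⟨x, u + w, by simpa using hu, ?_⟩
  rw [← add_assoc, hxu, zero_add]

theorem MaxMonoOp.mem_of_forall_inner_add_inner_nonneg {H' : Type*} [NormedAddCommGroup H']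
    [InnerProductSpace ℝ H'] [FiniteDimensional ℝ H'] {S' : H' → Set H'} (hS : MaxMonoOp S)
    (hS' : MaxMonoOp S') {a b : H} {a' b' : H'}
    (h : ∀ y v y' v', v ∈ S y → v' ∈ S' y' → 0 ≤ ⟪a - y, b - v⟫ + ⟪a' - y', b' - v'⟫) :
    b ∈ S a := by
  obtain ⟨y', v', hv', hsum⟩ := hS'.exists_add_eq (a' + b')
  refine hS.mem_of_forall_inner_nonneg fun y v hv => ?_
  have h' := h y v y' v' hv hv'
  have hdiag : a' - y' = -(b' - v') := by
    rw [neg_sub, sub_eq_sub_iff_add_eq_add, ← hsum, add_comm]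
  rw [hdiag, inner_neg_left, real_inner_self_eq_norm_sq] at h'
  linarith [sq_nonneg ‖b' - v'‖]

end Fitzpatrick

theorem MaxMonoOp.prod {H₁ H₂ : Type*} [NormedAddCommGroup H₁] [InnerProductSpace ℝ H₁]
    [FiniteDimensional ℝ H₁] [NormedAddCommGroup H₂] [InnerProductSpace ℝ H₂]
    [FiniteDimensional ℝ H₂] {S₁ : H₁ → Set H₁} {S₂ : H₂ → Set H₂} (hS₁ : MaxMonoOp S₁)
    (hS₂ : MaxMonoOp S₂) :
    MaxMonoOp (fun p : WithLp 2 (H₁ × H₂) => {q | q.fst ∈ S₁ p.fst ∧ q.snd ∈ S₂ p.snd}) := by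
  refine maxMonoOp_iff.2 ⟨fun p p' q q' ⟨hq₁, hq₂⟩ ⟨hq₁', hq₂'⟩ =>
    add_nonneg (hS₁.1 _ _ _ _ hq₁ hq₁') (hS₂.1 _ _ _ _ hq₂ hq₂'), fun a b hab => ⟨?_, ?_⟩⟩
  · exact hS₁.mem_of_forall_inner_add_inner_nonneg hS₂ fun y v y' v' hv hv' =>
      hab (WithLp.toLp 2 (y, y')) (WithLp.toLp 2 (v, v')) ⟨hv, hv'⟩
  · exact hS₂.mem_of_forall_inner_add_inner_nonneg hS₁ fun y v y' v' hv hv' =>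
      (hab (WithLp.toLp 2 (y', y)) (WithLp.toLp 2 (v', v)) ⟨hv', hv⟩).trans_eq (add_comm _ _)

theorem stmt7_general {E : Type*} [NormedAddCommGroup E] [InnerProductSpace ℝ E]
    [FiniteDimensional ℝ E]
    (T : E → Set E) (hT : MaxMonoOp T)
    (α : ℝ) (hα : 0 < α)
    (B : E →ₗ[ℝ] E)
    (hBsym : ∀ x y, ⟪B x, y⟫ = ⟪x, B y⟫) :
    ∀ ζ η : E, ∃ Z Y V : E, V ∈ T Z ∧ Z + (α • V + B Y) = ζ ∧ Y + (-(B Z)) = η := by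
  intro ζ η
  let L : WithLp 2 (E × E) → WithLp 2 (E × E) := fun p => WithLp.toLp 2 (B p.snd, -B p.fst)
  have hL : ∀ p p', ⟪p - p', L p - L p'⟫ = 0 := fun p p' => by
    change ⟪p.fst - p'.fst, B p.snd - B p'.snd⟫ + ⟪p.snd - p'.snd, -B p.fst - -B p'.fst⟫ = 0
    rw [neg_sub_neg, ← map_sub, ← map_sub, ← neg_sub p.fst, map_neg, inner_neg_right, ← hBsym,
      real_inner_comm, add_neg_cancel]
  obtain ⟨p, q, ⟨⟨V, hV, hαV⟩, hq⟩, hpq⟩ :=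
    (((hT.smul hα).prod maxMonoOp_zero).add_skew hL).exists_add_eq (WithLp.toLp 2 (ζ, η))
  replace hαV : α • V = q.fst - B p.snd := hαV
  replace hq : q.snd = -B p.fst := sub_eq_zero.1 hq
  refine ⟨p.fst, p.snd, V, hV, ?_, ?_⟩
  · rw [hαV, sub_add_cancel]
    exact congrArg WithLp.fst hpq
  · rw [← hq]
    exact congrArg WithLp.snd hpq

/-- Let `T` be maximal monotone on a finite-dimensional inner product
space `E`, `α > 0`, and `B` symmetric positive semidefinite. Then the operator
`Φ(Z, Y) = (αT(Z) + BY, −BZ)` on `E × E` is maximal monotone, i.e. `I + Φ` is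
surjective: for every `(ζ, η)` there exist `(Z, Y)` and `V ∈ T(Z)` with
`Z + (αV + BY) = ζ` and `Y − BZ = η`. -/
theorem stmt7 {E : Type*} [NormedAddCommGroup E] [InnerProductSpace ℝ E]
    [FiniteDimensional ℝ E]
    (T : E → Set E) (hT : MaxMonoOp T)
    (α : ℝ) (hα : 0 < α)
    (B : E →ₗ[ℝ] E)
    (hBsym : ∀ x y, ⟪B x, y⟫ = ⟪x, B y⟫)
    (hBpsd : ∀ x, 0 ≤ ⟪x, B x⟫) :
    ∀ ζ η : E, ∃ Z Y V : E, V ∈ T Z ∧ Z + (α • V + B Y) = ζ ∧ Y + (-(B Z)) = η :=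
  stmt7_general T hT α hα B hBsym
end

section
/- Let T₁,…,T_N : ℝⁿ ⇉ ℝⁿ be maximal monotone with product operator T, C = W̃ − W symmetric positive semidefinite with null(√C) = span{𝟏}, and α > 0. If z* ∈ ℝⁿ satisfies 0 ∈ Σᵢ Tᵢ(z*), then there exist Y* ∈ range(√C) and Z* = 𝟏 (z*)^⊤ such that 0 ∈ αT(Z*) + √C Y* and √C Z* = 0. Conversely, if a pair (Z*, Y*) satisfies 0 ∈ αT(Z*) + √C Y* and √C Z* = 0, then Z* = 𝟏 (z*)^⊤ for some z* with 0 ∈ Σᵢ Tᵢ(z*). -/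
/-!
A symmetric matrix `S` whose kernel is spanned by `𝟏` has as range the orthogonal complement of
`𝟏`, i.e. the zero-sum vectors, and acting row-wise on families of vectors it keeps both
properties: its kernel consists of the constant families and its range of the zero-sum families.
Hence `0 ∈ Σᵢ Tᵢ(z*)`, witnessed by `vᵢ ∈ Tᵢ(z*)`, makes `-α v` a zero-sum family, so
`-α v = S Y*` with `Y*` itself zero-sum and thus in the range of `S`. Conversely `S Z* = 0`
makes `Z*` constant, and summing the rows of `0 = α V + S Y*` kills `S Y*` because the columns
of `S` sum to zero, leaving `α Σᵢ Vᵢ = 0`.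
-/

open RealInnerProductSpace

namespace Matrix

variable {ι : Type*} [Fintype ι] {S : Matrix ι ι ℝ}

theorem sum_apply_eq_zero_of_mulVec_one (hS1 : S *ᵥ (fun _ => 1) = 0) (i : ι) :
    ∑ j, S i j = 0 := by
  simpa [mulVec, dotProduct] using congrFun hS1 i

theorem sum_smul_const_eq_zero {E : Type*} [AddCommGroup E] [Module ℝ E]
    (hS1 : S *ᵥ (fun _ => 1) = 0) (i : ι) (z : E) : ∑ j, S i j • z = 0 := by
  rw [← Finset.sum_smul, sum_apply_eq_zero_of_mulVec_one hS1, zero_smul]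

theorem IsHermitian.sum_sum_smul_eq_zero {E : Type*} [AddCommGroup E] [Module ℝ E]
    (hS : S.IsHermitian) (hS1 : S *ᵥ (fun _ => 1) = 0) (Y : ι → E) :
    ∑ i, ∑ j, S i j • Y j = 0 := by
  rw [Finset.sum_comm]
  refine Finset.sum_eq_zero fun j _ => ?_
  simpa [← hS.apply j] using sum_smul_const_eq_zero hS1 j (Y j)

theorem IsHermitian.exists_mulVec_eq_of_sum_eq_zero [DecidableEq ι] (hS : S.IsHermitian)
    (hker : ∀ v, S *ᵥ v = 0 → ∃ c : ℝ, v = fun _ => c) {w : ι → ℝ} (hw : ∑ i, w i = 0) :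
    ∃ y, S *ᵥ y = w := by
  set T := toEuclideanLin S
  have hT : T.IsSymmetric := isSymmetric_toEuclideanLin_iff.mpr hS
  have hw' : WithLp.toLp 2 w ∈ (LinearMap.ker T)ᗮ := by
    intro u hu
    obtain ⟨c, hc⟩ := hker u.ofLp (congrArg WithLp.ofLp hu)
    simp [EuclideanSpace.inner_eq_star_dotProduct, hc, dotProduct, ← Finset.sum_mul, hw]
  rw [← hT.orthogonal_range, Submodule.orthogonal_orthogonal] at hw'
  obtain ⟨y, hy⟩ := hw'
  exact ⟨y.ofLp, congrArg WithLp.ofLp hy⟩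

theorem IsHermitian.exists_mulVec_eq_and_sum_eq_zero [DecidableEq ι] (hS : S.IsHermitian)
    (hker : ∀ v, S *ᵥ v = 0 ↔ ∃ c : ℝ, v = fun _ => c) {w : ι → ℝ} (hw : ∑ i, w i = 0) :
    ∃ y, ∑ i, y i = 0 ∧ S *ᵥ y = w := by
  obtain ⟨y, hy⟩ := hS.exists_mulVec_eq_of_sum_eq_zero (fun v => (hker v).mp) hw
  rcases isEmpty_or_nonempty ι with hι | hι
  · exact ⟨y, by simp, hy⟩
  refine ⟨y - fun _ => (∑ i, y i) / Fintype.card ι, ?_, ?_⟩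
  · have : (Fintype.card ι : ℝ) ≠ 0 := Nat.cast_ne_zero.mpr Fintype.card_ne_zero
    simp [Finset.sum_sub_distrib, mul_div_cancel₀ _ this]
  · rw [mulVec_sub, hy, (hker _).mpr ⟨_, rfl⟩, sub_zero]

theorem IsHermitian.exists_sum_smul_eq_of_sum_eq_zero [DecidableEq ι] {E : Type*}
    [AddCommGroup E] [Module ℝ E] (hS : S.IsHermitian)
    (hker : ∀ v, S *ᵥ v = 0 ↔ ∃ c : ℝ, v = fun _ => c) {W : ι → E} (hW : ∑ i, W i = 0) :
    ∃ Y : ι → E, ∑ i, Y i = 0 ∧ ∀ i, ∑ j, S i j • Y j = W i := by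
  set c : ℝ := (Fintype.card ι : ℝ)⁻¹
  have hcentered (k : ι) : ∑ i, ((Pi.single k 1 : ι → ℝ) i - c) = 0 := by
    have : (Fintype.card ι : ℝ) ≠ 0 := Nat.cast_ne_zero.mpr ((Fintype.card_pos_iff.mpr ⟨k⟩).ne')
    simp [c, Finset.sum_sub_distrib, this]
  -- `p k` is a zero-sum solution of `S p = eₖ - 𝟏 / N`; since `∑ W = 0`, the `𝟏 / N` parts cancel.
  choose p hp0 hp using fun k => hS.exists_mulVec_eq_and_sum_eq_zero hker (hcentered k)
  refine ⟨fun i => ∑ k, p k i • W k, ?_, fun i => ?_⟩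
  · rw [Finset.sum_comm]
    simp [← Finset.sum_smul, hp0]
  calc ∑ j, S i j • ∑ k, p k j • W k = ∑ k, (S *ᵥ p k) i • W k := by
        simp only [Finset.smul_sum, smul_smul, mulVec, dotProduct, Finset.sum_smul]
        exact Finset.sum_comm
    _ = ∑ k, ((Pi.single k 1 : ι → ℝ) i - c) • W k := by simp [hp]
    _ = W i - c • ∑ k, W k := by
        simp [sub_smul, Finset.sum_sub_distrib, Pi.single_apply, ← Finset.smul_sum]
    _ = W i := by rw [hW, smul_zero, sub_zero]

theorem exists_eq_const_of_sum_smul_eq_zero {E : Type*} [AddCommGroup E] [Module ℝ E]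
    (hker : ∀ v, S *ᵥ v = 0 → ∃ c : ℝ, v = fun _ => c) {Z : ι → E}
    (hZ : ∀ i, ∑ j, S i j • Z j = 0) : ∃ z, ∀ i, Z i = z := by
  rcases isEmpty_or_nonempty ι with hι | ⟨⟨i₀⟩⟩
  · exact ⟨0, isEmptyElim⟩
  refine ⟨Z i₀, fun i => sub_eq_zero.mp <| (Module.forall_dual_apply_eq_zero_iff ℝ _).mp fun φ => ?_⟩
  obtain ⟨c, hc⟩ := hker (φ ∘ Z) <| funext fun i => by
    simpa [mulVec, dotProduct, mul_comm] using congrArg φ (hZ i)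
  rw [map_sub, sub_eq_zero]
  exact (congrFun hc i).trans (congrFun hc i₀).symm

end Matrix

theorem stmt9_general (N n : ℕ)
    (S : Matrix (Fin N) (Fin N) ℝ) (hSpsd : S.PosSemidef)
    (hnull : ∀ v : Fin N → ℝ, S.mulVec v = 0 ↔ ∃ c : ℝ, v = fun _ => c)
    (α : ℝ) (hα : 0 < α)
    (Ti : Fin N → (EuclideanSpace ℝ (Fin n) → Set (EuclideanSpace ℝ (Fin n)))) :
    (∀ zstar : EuclideanSpace ℝ (Fin n),
      (∃ v : Fin N → EuclideanSpace ℝ (Fin n),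
        (∀ i, v i ∈ Ti i zstar) ∧ ∑ i, v i = 0) →
      ∃ Ystar : Fin N → EuclideanSpace ℝ (Fin n),
        (∃ Y : Fin N → EuclideanSpace ℝ (Fin n), ∀ i, Ystar i = ∑ j, S i j • Y j) ∧
        (∃ V : Fin N → EuclideanSpace ℝ (Fin n),
          (∀ i, V i ∈ Ti i zstar) ∧
          (∀ i, α • V i + ∑ j, S i j • Ystar j = 0)) ∧
        (∀ i, (∑ j, S i j • zstar) = (0 : EuclideanSpace ℝ (Fin n))))
    ∧
    (∀ Zstar Ystar : Fin N → EuclideanSpace ℝ (Fin n),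
      (∃ V : Fin N → EuclideanSpace ℝ (Fin n),
        (∀ i, V i ∈ Ti i (Zstar i)) ∧
        (∀ i, α • V i + ∑ j, S i j • Ystar j = 0)) →
      (∀ i, (∑ j, S i j • Zstar j) = (0 : EuclideanSpace ℝ (Fin n))) →
      ∃ zstar : EuclideanSpace ℝ (Fin n),
        (∀ i, Zstar i = zstar) ∧
        (∃ v : Fin N → EuclideanSpace ℝ (Fin n),
          (∀ i, v i ∈ Ti i zstar) ∧ ∑ i, v i = 0)) := by
  have hS := hSpsd.isHermitian
  have hS1 : S.mulVec (fun _ => 1) = 0 := (hnull _).mpr ⟨1, rfl⟩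
  refine ⟨fun zstar ⟨v, hv, hvsum⟩ => ?_, fun Zstar Ystar ⟨V, hV, hVY⟩ hZ => ?_⟩
  · have hαv : ∑ i, (-α) • v i = 0 := by rw [← Finset.smul_sum, hvsum, smul_zero]
    obtain ⟨Ystar, hYsum, hSY⟩ := hS.exists_sum_smul_eq_of_sum_eq_zero hnull hαv
    obtain ⟨Y, -, hSY'⟩ := hS.exists_sum_smul_eq_of_sum_eq_zero hnull hYsum
    refine ⟨Ystar, ⟨Y, fun i => (hSY' i).symm⟩, ⟨v, hv, fun i => ?_⟩,
      fun i => Matrix.sum_smul_const_eq_zero hS1 i zstar⟩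
    rw [hSY i, neg_smul, add_neg_cancel]
  · obtain ⟨z, hz⟩ := Matrix.exists_eq_const_of_sum_smul_eq_zero (fun v => (hnull v).mp) hZ
    refine ⟨z, hz, V, fun i => hz i ▸ hV i, ?_⟩
    have hαV : α • ∑ i, V i = 0 := by
      have hSYsum := hS.sum_sum_smul_eq_zero hS1 Ystar
      simp_rw [fun i => eq_neg_of_add_eq_zero_right (hVY i)] at hSYsum
      simpa [Finset.smul_sum] using hSYsum
    exact (smul_eq_zero.mp hαV).resolve_left hα.ne'

/-- Lemma 1 of the paper: Let `T₁,…,T_N` be maximal monotone on `ℝⁿ`,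
`S = √C` symmetric positive semidefinite with `null(S) = span{𝟏}`, and `α > 0`.
If `0 ∈ Σᵢ Tᵢ(z*)` then there exist `Y* ∈ range(S)` and `Z* = 𝟏 (z*)ᵀ` (i.e. all rows
equal to `z*`) with `0 ∈ αT(Z*) + S Y*` and `S Z* = 0`. Conversely, if a pair
`(Z*, Y*)` satisfies these relations then `Z*` is consensual, `Z* = 𝟏 (z*)ᵀ`, with
`0 ∈ Σᵢ Tᵢ(z*)`. Here `S` acts on `Fin N`-indexed families of vectors row-wise. -/
theorem stmt9 (N n : ℕ)
    (S : Matrix (Fin N) (Fin N) ℝ) (hSpsd : S.PosSemidef)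
    (hnull : ∀ v : Fin N → ℝ, S.mulVec v = 0 ↔ ∃ c : ℝ, v = fun _ => c)
    (α : ℝ) (hα : 0 < α)
    (Ti : Fin N → (EuclideanSpace ℝ (Fin n) → Set (EuclideanSpace ℝ (Fin n))))
    (hTi : ∀ i, MaxMonoOp (Ti i)) :
    (∀ zstar : EuclideanSpace ℝ (Fin n),
      (∃ v : Fin N → EuclideanSpace ℝ (Fin n),
        (∀ i, v i ∈ Ti i zstar) ∧ ∑ i, v i = 0) →
      ∃ Ystar : Fin N → EuclideanSpace ℝ (Fin n),
        (∃ Y : Fin N → EuclideanSpace ℝ (Fin n), ∀ i, Ystar i = ∑ j, S i j • Y j) ∧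
        (∃ V : Fin N → EuclideanSpace ℝ (Fin n),
          (∀ i, V i ∈ Ti i zstar) ∧
          (∀ i, α • V i + ∑ j, S i j • Ystar j = 0)) ∧
        (∀ i, (∑ j, S i j • zstar) = (0 : EuclideanSpace ℝ (Fin n))))
    ∧
    (∀ Zstar Ystar : Fin N → EuclideanSpace ℝ (Fin n),
      (∃ V : Fin N → EuclideanSpace ℝ (Fin n),
        (∀ i, V i ∈ Ti i (Zstar i)) ∧
        (∀ i, α • V i + ∑ j, S i j • Ystar j = 0)) →
      (∀ i, (∑ j, S i j • Zstar j) = (0 : EuclideanSpace ℝ (Fin n))) →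
      ∃ zstar : EuclideanSpace ℝ (Fin n),
        (∀ i, Zstar i = zstar) ∧
        (∃ v : Fin N → EuclideanSpace ℝ (Fin n),
          (∀ i, v i ∈ Ti i zstar) ∧ ∑ i, v i = 0)) :=
  stmt9_general N n S hSpsd hnull α hα Ti
end

section
/- Let (a_k) be a sequence in a finite-dimensional normed space with exactly the following property: for every cluster point ξ of (a_k), the limit lim_k ‖a_k − ξ‖_{P²} exists (where P ≻ 0 is fixed). Then (a_k), if bounded, has at most one cluster point and hence converges. -/
open RealInnerProductSpace Filter Topology

/-!
If `ξ` is a cluster point of `(a_k)` then `0 = ‖P (ξ - ξ)‖` is a cluster point of the convergent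
sequence `‖P (a_k - ξ)‖`, so its limit is `0`, i.e. `P a_k → P ξ`. Limits being unique, all cluster
points have the same image under the injective map `P`, hence coincide; a bounded sequence in a
finite-dimensional space with a unique cluster point converges to it by compactness.
-/

theorem MapClusterPt.eq_of_tendsto {X ι : Type*} [TopologicalSpace X] [T2Space X] {l : Filter ι}
    {u : ι → X} {x y : X} (hx : MapClusterPt x l u) (hu : Tendsto u l (𝓝 y)) : x = y :=
  eq_of_nhds_neBot (hx.neBot.mono (inf_le_inf_left _ hu))

theorem MapClusterPt.tendsto_of_tendsto_norm_map_sub {E F 𝓕 ι : Type*} [SeminormedAddCommGroup E]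
    [SeminormedAddCommGroup F] [FunLike 𝓕 E F] [AddMonoidHomClass 𝓕 E F] {f : 𝓕}
    (hf : Continuous f) {l : Filter ι} {a : ι → E} {ξ : E} {L : ℝ} (hξ : MapClusterPt ξ l a)
    (hL : Tendsto (fun k => ‖f (a k - ξ)‖) l (𝓝 L)) :
    Tendsto (fun k => f (a k)) l (𝓝 (f ξ)) := by
  have hcont : Continuous fun x => ‖f (x - ξ)‖ := by fun_prop
  have hL0 : 0 = L := by
    simpa using (hξ.continuousAt_comp hcont.continuousAt).eq_of_tendsto hL
  subst hL0
  rw [tendsto_iff_norm_sub_tendsto_zero]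
  simpa only [map_sub] using hL

theorem tendsto_of_isBounded_of_mapClusterPt_unique {X ι : Type*} [PseudoMetricSpace X]
    [ProperSpace X] {l : Filter ι} [NeBot l] {a : ι → X} (hbdd : Bornology.IsBounded (Set.range a))
    (huniq : ∀ ξ₁ ξ₂, MapClusterPt ξ₁ l a → MapClusterPt ξ₂ l a → ξ₁ = ξ₂) :
    ∃ ξ, Tendsto a l (𝓝 ξ) := by
  have hK := hbdd.isCompact_closure
  have hmem : ∀ᶠ k in l, a k ∈ closure (Set.range a) :=
    Eventually.of_forall fun k => subset_closure (Set.mem_range_self k)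
  obtain ⟨ξ, -, hξ⟩ := hK.exists_mapClusterPt (le_principal_iff.2 hmem)
  exact ⟨ξ, hK.tendsto_nhds_of_unique_mapClusterPt hmem fun η _ hη => huniq η ξ hη hξ⟩

theorem LinearMap.injective_of_forall_inner_self_pos {E : Type*} [NormedAddCommGroup E]
    [InnerProductSpace ℝ E] {P : E →ₗ[ℝ] E} (hP : ∀ x, x ≠ 0 → 0 < ⟪x, P x⟫) :
    Function.Injective P :=
  (injective_iff_map_eq_zero P).2 fun x hx => by
    by_contra hne
    simpa [hx] using hP x hne

theorem stmt12_general {E : Type*} [NormedAddCommGroup E] [InnerProductSpace ℝ E]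
    [FiniteDimensional ℝ E]
    (P : E →ₗ[ℝ] E)
    (hPpos : ∀ x, x ≠ 0 → 0 < ⟪x, P x⟫)
    (a : ℕ → E)
    (hconv : ∀ ξ, MapClusterPt ξ atTop a →
      ∃ L, Tendsto (fun k => ‖P (a k - ξ)‖) atTop (nhds L))
    (hbdd : ∃ M, ∀ k, ‖a k‖ ≤ M) :
    (∀ ξ₁ ξ₂, MapClusterPt ξ₁ atTop a → MapClusterPt ξ₂ atTop a → ξ₁ = ξ₂) ∧
    ∃ ξ, Tendsto a atTop (nhds ξ) := by
  have hPa : ∀ ξ, MapClusterPt ξ atTop a → Tendsto (fun k => P (a k)) atTop (𝓝 (P ξ)) :=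
    fun ξ hξ => (hconv ξ hξ).elim fun _ hL =>
      hξ.tendsto_of_tendsto_norm_map_sub P.continuous_of_finiteDimensional hL
  have huniq : ∀ ξ₁ ξ₂, MapClusterPt ξ₁ atTop a → MapClusterPt ξ₂ atTop a → ξ₁ = ξ₂ :=
    fun ξ₁ ξ₂ h₁ h₂ => LinearMap.injective_of_forall_inner_self_pos hPpos
      (tendsto_nhds_unique (hPa ξ₁ h₁) (hPa ξ₂ h₂))
  obtain ⟨M, hM⟩ := hbdd
  have hrange : Bornology.IsBounded (Set.range a) :=
    isBounded_iff_forall_norm_le.2 ⟨M, Set.forall_mem_range.2 hM⟩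
  exact ⟨huniq, tendsto_of_isBounded_of_mapClusterPt_unique hrange huniq⟩

/-- Let `(a_k)` be a bounded sequence in a finite-dimensional inner product
space such that for every cluster point `ξ` of `(a_k)` the limit `lim_k ‖a_k − ξ‖_{P²}`
exists (`P ≻ 0` symmetric, `‖x‖_{P²} = ‖Px‖`). Then `(a_k)` has at most one cluster point
and hence converges. -/
theorem stmt12 {E : Type*} [NormedAddCommGroup E] [InnerProductSpace ℝ E]
    [FiniteDimensional ℝ E]
    (P : E →ₗ[ℝ] E)
    (hPsym : ∀ x y, ⟪P x, y⟫ = ⟪x, P y⟫)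
    (hPpos : ∀ x, x ≠ 0 → 0 < ⟪x, P x⟫)
    (a : ℕ → E)
    (hconv : ∀ ξ, MapClusterPt ξ atTop a →
      ∃ L, Tendsto (fun k => ‖P (a k - ξ)‖) atTop (nhds L))
    (hbdd : ∃ M, ∀ k, ‖a k‖ ≤ M) :
    (∀ ξ₁ ξ₂, MapClusterPt ξ₁ atTop a → MapClusterPt ξ₂ atTop a → ξ₁ = ξ₂) ∧
    ∃ ξ, Tendsto a atTop (nhds ξ) :=
  stmt12_general P hPpos a hconv hbdd
end

section
/- Let F : E → E be nonexpansive on a finite-dimensional normed space with a fixed point ξ*. Suppose a sequence (ξ^k) satisfies ‖ξ^{k+1} − F(ξ^k)‖ ≤ ε_k with Σ_k ε_k < ∞. Then lim_k ‖ξ^k − ξ*‖ exists and the sequence (ξ^k) is bounded, with ‖ξ^{l+1} − ξ*‖ ≤ ‖ξ^0 − ξ*‖ + Σ_{k=0}^∞ ε_k for all l. -/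
/-!
Nonexpansiveness and the fixed point give `‖ξ^{k+1} − ξ*‖ ≤ ‖ξ^k − ξ*‖ + ε_k`. Hence
`‖ξ^k − ξ*‖ − Σ_{i<k} ε_i` is nonincreasing; it is bounded below because the partial sums of
`ε` converge, so it converges, and adding back the partial sums gives the limit of `‖ξ^k − ξ*‖`.
-/

open Filter Finset

section PerturbedDescent

variable {a ε : ℕ → ℝ}

theorem antitone_sub_sum_range_of_le_add (h : ∀ k, a (k + 1) ≤ a k + ε k) :
    Antitone fun k => a k - ∑ i ∈ range k, ε i :=
  antitone_nat_of_succ_le fun k => by rw [sum_range_succ]; linarith [h k]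

theorem le_add_sum_range_of_le_add (h : ∀ k, a (k + 1) ≤ a k + ε k) (n : ℕ) :
    a n ≤ a 0 + ∑ i ∈ range n, ε i := by
  have := antitone_sub_sum_range_of_le_add h (Nat.zero_le n)
  simp only [range_zero, sum_empty, sub_zero] at this
  linarith

theorem exists_tendsto_of_le_add_of_summable (h : ∀ k, a (k + 1) ≤ a k + ε k)
    (ha : BddBelow (Set.range a)) (hε : Summable ε) : ∃ L, Tendsto a atTop (nhds L) := by
  have hS := hε.hasSum.tendsto_sum_nat
  obtain ⟨m, hm⟩ := ha
  obtain ⟨M, hM⟩ := hS.bddAbove_range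
  have hbdd : BddBelow (Set.range fun k => a k - ∑ i ∈ range k, ε i) := by
    refine ⟨m - M, ?_⟩
    rintro _ ⟨k, rfl⟩
    linarith [hm ⟨k, rfl⟩, hM ⟨k, rfl⟩]
  exact ⟨_, by simpa using
    (tendsto_atTop_ciInf (antitone_sub_sum_range_of_le_add h) hbdd).add hS⟩

end PerturbedDescent

theorem stmt13_general {E : Type*} [NormedAddCommGroup E]
    (F : E → E) (hF : ∀ x y, ‖F x - F y‖ ≤ ‖x - y‖)
    (ξstar : E) (hfix : F ξstar = ξstar)
    (ξ : ℕ → E) (ε : ℕ → ℝ) (hε : ∀ k, 0 ≤ ε k) (hsum : Summable ε)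
    (hseq : ∀ k, ‖ξ (k + 1) - F (ξ k)‖ ≤ ε k) :
    (∃ L, Tendsto (fun k => ‖ξ k - ξstar‖) atTop (nhds L)) ∧
    (∀ l, ‖ξ (l + 1) - ξstar‖ ≤ ‖ξ 0 - ξstar‖ + ∑' k, ε k) := by
  have hstep : ∀ k, ‖ξ (k + 1) - ξstar‖ ≤ ‖ξ k - ξstar‖ + ε k := fun k => by
    have hF' := hF (ξ k) ξstar
    rw [hfix] at hF'
    linarith [norm_sub_le_norm_sub_add_norm_sub (ξ (k + 1)) (F (ξ k)) ξstar, hseq k]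
  refine ⟨exists_tendsto_of_le_add_of_summable hstep ⟨0, ?_⟩ hsum, fun l => ?_⟩
  · rintro _ ⟨k, rfl⟩
    exact norm_nonneg _
  · calc ‖ξ (l + 1) - ξstar‖ ≤ ‖ξ 0 - ξstar‖ + ∑ i ∈ range (l + 1), ε i :=
          le_add_sum_range_of_le_add (a := fun k => ‖ξ k - ξstar‖) hstep _
      _ ≤ ‖ξ 0 - ξstar‖ + ∑' k, ε k := by
          gcongr
          exact hsum.sum_le_tsum _ fun i _ => hε i

/-- Let `F` be nonexpansive on a finite-dimensional normed space with fixed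
point `ξ*`, and suppose `‖ξ^{k+1} − F(ξ^k)‖ ≤ ε_k` with `Σ ε_k < ∞`, `ε_k ≥ 0`. Then
`lim_k ‖ξ^k − ξ*‖` exists and `‖ξ^{l+1} − ξ*‖ ≤ ‖ξ^0 − ξ*‖ + Σ_{k} ε_k` for all `l`,
so the sequence is bounded. -/
theorem stmt13 {E : Type*} [NormedAddCommGroup E] [NormedSpace ℝ E]
    [FiniteDimensional ℝ E]
    (F : E → E) (hF : ∀ x y, ‖F x - F y‖ ≤ ‖x - y‖)
    (ξstar : E) (hfix : F ξstar = ξstar)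
    (ξ : ℕ → E) (ε : ℕ → ℝ) (hε : ∀ k, 0 ≤ ε k) (hsum : Summable ε)
    (hseq : ∀ k, ‖ξ (k + 1) - F (ξ k)‖ ≤ ε k) :
    (∃ L, Tendsto (fun k => ‖ξ k - ξstar‖) atTop (nhds L)) ∧
    (∀ l, ‖ξ (l + 1) - ξstar‖ ≤ ‖ξ 0 - ξstar‖ + ∑' k, ε k) :=
  stmt13_general F hF ξstar hfix ξ ε hε hsum hseq
end

section
/- Let Φ : E ⇉ E be maximal monotone on a finite-dimensional inner product space such that Φ⁻¹ is Lipschitz continuous at 0 with modulus a ≥ 0 (i.e., Φ⁻¹(0) = {ξ*} and ‖ξ − ξ*‖ ≤ a‖w‖ whenever ξ ∈ Φ⁻¹(w), ‖w‖ ≤ τ, for some τ > 0). Let P be the resolvent (I + Φ)⁻¹ and Ψ = I − P. Then for any ζ with ‖Ψ(ζ)‖ ≤ τ, one has ‖P(ζ) − ξ*‖ ≤ a‖Ψ(ζ)‖, and combined with ‖P(ζ) − ξ*‖² + ‖Ψ(ζ)‖² ≤ ‖ζ − ξ*‖², this gives ‖P(ζ) − ξ*‖ ≤ μ‖ζ −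 ξ*‖ where μ = a/√(a² + 1) < 1. -/
open RealInnerProductSpace

/-!
Monotonicity of `Φ` at the pair `(P ζ, ζ - P ζ)`, `(ξ*, 0)` makes `P ζ - ξ*` and `Ψ ζ = ζ - P ζ`
form a non-acute angle, so `‖P ζ - ξ*‖² + ‖Ψ ζ‖² ≤ ‖ζ - ξ*‖²`. The Lipschitz bound
`‖P ζ - ξ*‖ ≤ a ‖Ψ ζ‖` then gives `(1 + a²) ‖P ζ - ξ*‖² ≤ a² ‖ζ - ξ*‖²`.
-/

lemma norm_sq_add_norm_sq_le_norm_add_sq {H : Type*} [NormedAddCommGroup H]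
    [InnerProductSpace ℝ H] {u v : H} (h : 0 ≤ ⟪u, v⟫) :
    ‖u‖ ^ 2 + ‖v‖ ^ 2 ≤ ‖u + v‖ ^ 2 := by
  rw [norm_add_sq_real]
  linarith

lemma MonoOp.norm_sub_sq_add_norm_sub_sq_le {H : Type*} [NormedAddCommGroup H]
    [InnerProductSpace ℝ H] {T : H → Set H} (hT : MonoOp T) {ζ p x : H}
    (hp : ζ - p ∈ T p) (hx : (0 : H) ∈ T x) :
    ‖p - x‖ ^ 2 + ‖ζ - p‖ ^ 2 ≤ ‖ζ - x‖ ^ 2 := by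
  have hangle : 0 ≤ ⟪p - x, ζ - p⟫ := by simpa using hT p x (ζ - p) 0 hp hx
  simpa using norm_sq_add_norm_sq_le_norm_add_sq hangle

lemma div_sqrt_sq_add_one_lt_one (a : ℝ) : a / √(a ^ 2 + 1) < 1 := by
  have hs : 0 < √(a ^ 2 + 1) := Real.sqrt_pos.mpr (by positivity)
  rw [div_lt_one hs]
  calc a ≤ |a| := le_abs_self a
    _ = √(a ^ 2) := (Real.sqrt_sq_eq_abs a).symm
    _ < √(a ^ 2 + 1) := Real.sqrt_lt_sqrt (sq_nonneg a) (lt_add_one _)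

lemma le_div_sqrt_sq_add_one_mul {a p ψ q : ℝ} (ha : 0 ≤ a) (hp : 0 ≤ p) (hq : 0 ≤ q)
    (hlip : p ≤ a * ψ) (hpyth : p ^ 2 + ψ ^ 2 ≤ q ^ 2) :
    p ≤ a / √(a ^ 2 + 1) * q := by
  have hs : 0 < √(a ^ 2 + 1) := Real.sqrt_pos.mpr (by positivity)
  have hsq : (p * √(a ^ 2 + 1)) ^ 2 ≤ (a * q) ^ 2 := by
    rw [mul_pow, Real.sq_sqrt (by positivity)]
    nlinarith [mul_le_mul hlip hlip hp (by linarith)]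
  rw [div_mul_eq_mul_div, le_div_iff₀ hs]
  exact (pow_le_pow_iff_left₀ (by positivity) (by positivity) two_ne_zero).1 hsq

theorem stmt16_general {E : Type*} [NormedAddCommGroup E] [InnerProductSpace ℝ E]
    (Φ : E → Set E) (hΦ : MaxMonoOp Φ)
    (a τ : ℝ) (ha : 0 ≤ a)
    (ξstar : E)
    (hinv : ∀ ξ, (0 : E) ∈ Φ ξ ↔ ξ = ξstar)
    (hlip : ∀ ξ w, w ∈ Φ ξ → ‖w‖ ≤ τ → ‖ξ - ξstar‖ ≤ a * ‖w‖)
    (P : E → E) (hP : ∀ ζ, ζ - P ζ ∈ Φ (P ζ)) :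
    a / Real.sqrt (a ^ 2 + 1) < 1 ∧
    ∀ ζ, ‖ζ - P ζ‖ ≤ τ →
      ‖P ζ - ξstar‖ ≤ a * ‖ζ - P ζ‖ ∧
      ‖P ζ - ξstar‖ ≤ (a / Real.sqrt (a ^ 2 + 1)) * ‖ζ - ξstar‖ := by
  refine ⟨div_sqrt_sq_add_one_lt_one a, fun ζ hζ => ?_⟩
  have hbound : ‖P ζ - ξstar‖ ≤ a * ‖ζ - P ζ‖ := hlip (P ζ) (ζ - P ζ) (hP ζ) hζ
  have hpyth := hΦ.1.norm_sub_sq_add_norm_sub_sq_le (hP ζ) ((hinv ξstar).mpr rfl)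
  exact ⟨hbound, le_div_sqrt_sq_add_one_mul ha (norm_nonneg _) (norm_nonneg _) hbound hpyth⟩

/-- Let `Φ` be maximal monotone on a finite-dimensional inner product space
with `Φ⁻¹` Lipschitz continuous at `0` with modulus `a ≥ 0`: `Φ⁻¹(0) = {ξ*}` and
`‖ξ − ξ*‖ ≤ a‖w‖` whenever `w ∈ Φ(ξ)`, `‖w‖ ≤ τ`. Let `P = (I+Φ)⁻¹` and `Ψ = I − P`.
Then for any `ζ` with `‖Ψ(ζ)‖ ≤ τ`: `‖P(ζ) − ξ*‖ ≤ a‖Ψ(ζ)‖`, and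
`‖P(ζ) − ξ*‖ ≤ μ‖ζ − ξ*‖` with `μ = a/√(a²+1) < 1`. -/
theorem stmt16 {E : Type*} [NormedAddCommGroup E] [InnerProductSpace ℝ E]
    [FiniteDimensional ℝ E]
    (Φ : E → Set E) (hΦ : MaxMonoOp Φ)
    (a τ : ℝ) (ha : 0 ≤ a) (hτ : 0 < τ)
    (ξstar : E)
    (hinv : ∀ ξ, (0 : E) ∈ Φ ξ ↔ ξ = ξstar)
    (hlip : ∀ ξ w, w ∈ Φ ξ → ‖w‖ ≤ τ → ‖ξ - ξstar‖ ≤ a * ‖w‖)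
    (P : E → E) (hP : ∀ ζ, ζ - P ζ ∈ Φ (P ζ)) :
    a / Real.sqrt (a ^ 2 + 1) < 1 ∧
    ∀ ζ, ‖ζ - P ζ‖ ≤ τ →
      ‖P ζ - ξstar‖ ≤ a * ‖ζ - P ζ‖ ∧
      ‖P ζ - ξstar‖ ≤ (a / Real.sqrt (a ^ 2 + 1)) * ‖ζ - ξstar‖ :=
  stmt16_general Φ hΦ a τ ha ξstar hinv hlip P hP
end

section
/- Let S : ℝⁿ ⇉ ℝᵐ be a polyhedral multifunction (its graph is a finite union of convex polyhedra). If S(x₀) is a singleton, then S is Lipschitz continuous at x₀: there exist a ≥ 0 and a neighborhood U of x₀ such that S(x) ⊆ S(x₀) + a‖x − x₀‖ B for all x ∈ U, where B is the closed unit ball. -/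
/-- A subset of a real vector space is a (convex) polyhedron: a finite intersection of
closed half-spaces. -/
def IsPolyhedron {V : Type*} [AddCommGroup V] [Module ℝ V] (K : Set V) : Prop :=
  ∃ (k : ℕ) (f : Fin k → (V →ₗ[ℝ] ℝ)) (c : Fin k → ℝ),
    K = {x | ∀ i, f i x ≤ c i}

/-!
Each polyhedron `P` in the union making up the graph is handled separately. If `x₀` is not in
the projection of `P`, it has a neighbourhood that misses this projection, because the
projection of a polyhedron is again a polyhedron (Fourier–Motzkin elimination), hence closed.
Otherwise `(x₀, y₀) ∈ P` and `P - (x₀, y₀)` lies in the tangent cone `C` of `P` at `(x₀, y₀)`,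
cut out by the active constraints. Every direction of `C` stays in `P` for a short time, so
the uniqueness of `y₀` forces `C ∩ ({0} × ℝᵐ) = 0`; by compactness of the unit sphere, a closed
cone with this property satisfies `‖v‖ ≤ L ‖u‖` for all `(u, v) ∈ C`.
-/

open Filter Topology

section Polyhedron

variable {V W : Type*} [AddCommGroup V] [Module ℝ V] [AddCommGroup W] [Module ℝ W]

theorem isPolyhedron_setOf_forall_le {ι : Type*} [Finite ι] (f : ι → V →ₗ[ℝ] ℝ) (c : ι → ℝ) :
    IsPolyhedron {x | ∀ i, f i x ≤ c i} := by
  obtain ⟨k, ⟨e⟩⟩ := Finite.exists_equiv_fin ι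
  refine ⟨k, fun j => f (e.symm j), fun j => c (e.symm j), ?_⟩
  ext x
  exact (e.symm.forall_congr_right (q := fun i => f i x ≤ c i)).symm

theorem IsPolyhedron.inter {K L : Set V} (hK : IsPolyhedron K) (hL : IsPolyhedron L) :
    IsPolyhedron (K ∩ L) := by
  obtain ⟨k, f, c, rfl⟩ := hK
  obtain ⟨l, g, d, rfl⟩ := hL
  convert isPolyhedron_setOf_forall_le (Sum.elim f g) (Sum.elim c d) using 1
  ext x
  simp [Sum.forall]

theorem IsPolyhedron.preimage {K : Set V} (hK : IsPolyhedron K) (φ : W →ₗ[ℝ] V) :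
    IsPolyhedron (φ ⁻¹' K) := by
  obtain ⟨k, f, c, rfl⟩ := hK
  exact ⟨k, fun i => (f i).comp φ, c, rfl⟩

theorem IsPolyhedron.image_linearEquiv {K : Set V} (hK : IsPolyhedron K) (e : V ≃ₗ[ℝ] W) :
    IsPolyhedron (e '' K) := by
  rw [e.image_eq_preimage_symm]
  exact hK.preimage e.symm.toLinearMap

theorem IsPolyhedron.isClosed {E : Type*} [NormedAddCommGroup E] [NormedSpace ℝ E]
    [FiniteDimensional ℝ E] {K : Set E} (hK : IsPolyhedron K) : IsClosed K := by
  obtain ⟨k, f, c, rfl⟩ := hK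
  rw [Set.ofPred_forall]
  exact isClosed_iInter fun i => isClosed_Iic.preimage (f i).continuous_of_finiteDimensional

end Polyhedron

section FourierMotzkin

theorem Set.Finite.nonempty_upperBounds_inter_lowerBounds {α : Type*}
    [ConditionallyCompleteLattice α] [Nonempty α] {A B : Set α} (hA : A.Finite) (hB : B.Finite)
    (hAB : ∀ x ∈ A, ∀ y ∈ B, x ≤ y) : (upperBounds A ∩ lowerBounds B).Nonempty := by
  rcases A.eq_empty_or_nonempty with rfl | hA₀
  · obtain ⟨t, ht⟩ := hB.bddBelow
    exact ⟨t, by simp, ht⟩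
  · exact ⟨sSup A, fun x hx => le_csSup hA.bddAbove hx,
      fun y hy => csSup_le hA₀ fun x hx => hAB x hx y hy⟩

theorem exists_forall_mul_le_iff {ι : Type*} [Finite ι] (a b : ι → ℝ) :
    (∃ t : ℝ, ∀ i, t * a i ≤ b i) ↔
      (∀ i, a i = 0 → 0 ≤ b i) ∧ ∀ i j, 0 < a i → a j < 0 → a j * b i ≤ a i * b j := by
  constructor
  · rintro ⟨t, ht⟩
    refine ⟨fun i hi => by simpa [hi] using ht i, fun i j hi hj => ?_⟩
    nlinarith [mul_le_mul_of_nonpos_left (ht i) hj.le, mul_le_mul_of_nonneg_left (ht j) hi.le]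
  · rintro ⟨hzero, hpair⟩
    obtain ⟨t, hlo, hup⟩ := Set.Finite.nonempty_upperBounds_inter_lowerBounds
      (A := (fun j => b j / a j) '' {j | a j < 0}) (B := (fun i => b i / a i) '' {i | 0 < a i})
      (Set.toFinite _) (Set.toFinite _) <| by
        rintro _ ⟨j, hj, rfl⟩ _ ⟨i, hi, rfl⟩
        change b j / a j ≤ b i / a i
        rw [← neg_div_neg_eq, div_le_div_iff₀ (neg_pos.2 hj) hi]
        nlinarith [hpair i j hi hj]
    refine ⟨t, fun i => ?_⟩
    rcases lt_trichotomy (a i) 0 with hi | hi | hi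
    · exact (div_le_iff_of_neg hi).1 (hlo ⟨i, hi, rfl⟩)
    · simpa [hi] using hzero i hi
    · exact (le_div_iff₀ hi).1 (hup ⟨i, hi, rfl⟩)

variable {V : Type*} [AddCommGroup V] [Module ℝ V]

theorem IsPolyhedron.image_fst_of_real {P : Set (V × ℝ)} (hP : IsPolyhedron P) :
    IsPolyhedron (Prod.fst '' P) := by
  obtain ⟨k, f, c, rfl⟩ := hP
  set g : Fin k → V →ₗ[ℝ] ℝ := fun i => (f i).comp (LinearMap.inl ℝ V ℝ)
  set a : Fin k → ℝ := fun i => f i (0, 1)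
  have hf : ∀ i w t, f i (w, t) = g i w + t * a i := fun i w t => by
    rw [show (w, t) = (w, 0) + t • ((0 : V), (1 : ℝ)) by simp, map_add, map_smul, smul_eq_mul]
    rfl
  have hproj : Prod.fst '' {z | ∀ i, f i z ≤ c i} =
      {w | ∀ i : {i // a i = 0}, g i w ≤ c i} ∩
        {w | ∀ p : {p : Fin k × Fin k // 0 < a p.1 ∧ a p.2 < 0},
          (a p.1.1 • g p.1.2 - a p.1.2 • g p.1.1) w ≤ a p.1.1 * c p.1.2 - a p.1.2 * c p.1.1} := by
    ext w
    have hw : w ∈ Prod.fst '' {z | ∀ i, f i z ≤ c i} ↔ ∃ t : ℝ, ∀ i, t * a i ≤ c i - g i w := by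
      simp only [Set.mem_image, Set.mem_ofPred_eq, Prod.exists, exists_and_right, exists_eq_right,
        hf, le_sub_iff_add_le']
    rw [hw, exists_forall_mul_le_iff]
    simp only [Set.mem_inter_iff, Set.mem_ofPred_eq, Subtype.forall, Prod.forall, sub_nonneg,
      LinearMap.sub_apply, LinearMap.smul_apply, smul_eq_mul]
    refine and_congr Iff.rfl (forall₂_congr fun i j => ⟨fun h hij => ?_, fun h hi hj => ?_⟩)
    · linarith [h hij.1 hij.2]
    · linarith [h ⟨hi, hj⟩]
  rw [hproj]
  exact (isPolyhedron_setOf_forall_le _ _).inter (isPolyhedron_setOf_forall_le _ _)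

theorem IsPolyhedron.image_fst_of_pi :
    ∀ {d : ℕ} {P : Set (V × (Fin d → ℝ))}, IsPolyhedron P → IsPolyhedron (Prod.fst '' P)
  | 0, P, hP => hP.image_linearEquiv (LinearEquiv.prodUnique (R := ℝ))
  | d + 1, P, hP => by
    let e : (V × (Fin (d + 1) → ℝ)) ≃ₗ[ℝ] (V × (Fin d → ℝ)) × ℝ :=
      (LinearEquiv.refl ℝ V).prodCongr
          ((Fin.consLinearEquiv ℝ fun _ => ℝ).symm ≪≫ₗ LinearEquiv.prodComm ℝ ℝ _) ≪≫ₗ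
        (LinearEquiv.prodAssoc ℝ V _ ℝ).symm
    have he : Prod.fst '' P = Prod.fst '' (Prod.fst '' (e '' P)) := by
      simp only [Set.image_image]
      rfl
    rw [he]
    exact image_fst_of_pi (hP.image_linearEquiv e).image_fst_of_real

theorem IsPolyhedron.image_fst {U : Type*} [AddCommGroup U] [Module ℝ U] [FiniteDimensional ℝ U]
    {P : Set (V × U)} (hP : IsPolyhedron P) : IsPolyhedron (Prod.fst '' P) := by
  let e := (LinearEquiv.refl ℝ V).prodCongr (Module.finBasis ℝ U).equivFun
  have he : Prod.fst '' P = Prod.fst '' (e '' P) := by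
    simp only [Set.image_image]
    rfl
  rw [he]
  exact (hP.image_linearEquiv e).image_fst_of_pi

end FourierMotzkin

section TangentCone

variable {V : Type*} [AddCommGroup V] [Module ℝ V] {ι : Type*}
  (f : ι → V →ₗ[ℝ] ℝ) (c : ι → ℝ)

def polyhedralTangentCone (z₀ : V) : Set V :=
  {d | ∀ i, f i z₀ = c i → f i d ≤ 0}

variable {f c}

theorem sub_mem_polyhedralTangentCone {z₀ z : V} (hz : ∀ i, f i z ≤ c i) :
    z - z₀ ∈ polyhedralTangentCone f c z₀ := fun i hi => by
  rw [map_sub, hi, sub_nonpos]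
  exact hz i

theorem smul_mem_polyhedralTangentCone {z₀ d : V} (hd : d ∈ polyhedralTangentCone f c z₀)
    {t : ℝ} (ht : 0 ≤ t) : t • d ∈ polyhedralTangentCone f c z₀ := fun i hi => by
  rw [map_smul, smul_eq_mul]
  exact mul_nonpos_of_nonneg_of_nonpos ht (hd i hi)

theorem exists_pos_add_smul_mem_of_mem_polyhedralTangentCone [Finite ι] {z₀ d : V}
    (hz₀ : ∀ i, f i z₀ ≤ c i) (hd : d ∈ polyhedralTangentCone f c z₀) :
    ∃ t : ℝ, 0 < t ∧ ∀ i, f i (z₀ + t • d) ≤ c i := by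
  have hev : ∀ᶠ t in 𝓝[>] (0 : ℝ), ∀ i, f i (z₀ + t • d) ≤ c i := by
    refine eventually_all.2 fun i => ?_
    simp only [map_add, map_smul, smul_eq_mul]
    rcases (hz₀ i).eq_or_lt with hi | hi
    · filter_upwards [self_mem_nhdsWithin] with t ht
      nlinarith [hd i hi, Set.mem_Ioi.1 ht]
    · have hlim : Tendsto (fun t : ℝ => f i z₀ + t * f i d) (𝓝 0) (𝓝 (f i z₀)) := by
        have : Continuous fun t : ℝ => f i z₀ + t * f i d := by fun_prop
        simpa using this.tendsto 0
      exact nhdsWithin_le_nhds ((hlim.eventually_lt_const hi).mono fun t ht => ht.le)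
  exact (eventually_mem_nhdsWithin.and hev).exists

end TangentCone

section LocalBound

variable {E F : Type*} [NormedAddCommGroup E] [NormedSpace ℝ E] [FiniteDimensional ℝ E]
  [NormedAddCommGroup F] [NormedSpace ℝ F] [FiniteDimensional ℝ F]

theorem isClosed_polyhedralTangentCone {ι : Type*} {f : ι → E →ₗ[ℝ] ℝ} {c : ι → ℝ} (z₀ : E) :
    IsClosed (polyhedralTangentCone f c z₀) := by
  simp only [polyhedralTangentCone, Set.ofPred_forall]
  exact isClosed_iInter fun i => isClosed_iInter fun _ =>
    isClosed_le (f i).continuous_of_finiteDimensional continuous_const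

theorem exists_norm_snd_le_mul_norm_fst {C : Set (E × F)} (hC : IsClosed C)
    (hcone : ∀ z ∈ C, ∀ t : ℝ, 0 ≤ t → t • z ∈ C) (hfib : ∀ v : F, ((0 : E), v) ∈ C → v = 0) :
    ∃ L : ℝ, 0 ≤ L ∧ ∀ z ∈ C, ‖z.2‖ ≤ L * ‖z.1‖ := by
  have hK : IsCompact (C ∩ Metric.sphere 0 1) := (isCompact_sphere 0 1).inter_left hC
  have hpos : ∀ z ∈ C ∩ Metric.sphere 0 1, 0 < ‖z.1‖ := by
    rintro ⟨x, y⟩ ⟨hz, hz₁⟩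
    refine norm_pos_iff.2 fun hx => ?_
    subst hx
    obtain rfl := hfib y hz
    simp at hz₁
  obtain ⟨δ, hδ, hδle⟩ :=
    hK.exists_forall_le' (continuous_norm.comp continuous_fst).continuousOn hpos
  refine ⟨δ⁻¹, by positivity, fun z hz => ?_⟩
  rcases eq_or_ne z 0 with rfl | hz₀
  · simp
  have hnz : 0 < ‖z‖ := norm_pos_iff.2 hz₀
  have hu : δ ≤ ‖(‖z‖⁻¹ • z).1‖ :=
    hδle _ ⟨hcone z hz _ (by positivity), by simp [norm_smul, hnz.ne']⟩
  rw [Prod.smul_fst, norm_smul, norm_inv, norm_norm, le_inv_mul_iff₀ hnz] at hu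
  calc ‖z.2‖ ≤ ‖z‖ := norm_snd_le z
    _ ≤ δ⁻¹ * ‖z.1‖ := by rw [le_inv_mul_iff₀ hδ]; linarith

theorem IsPolyhedron.exists_norm_snd_sub_le {P : Set (E × F)} (hP : IsPolyhedron P) {x₀ : E}
    {y₀ : F} (h₀ : (x₀, y₀) ∈ P) (hfiber : ∀ y, (x₀, y) ∈ P → y = y₀) :
    ∃ L : ℝ, 0 ≤ L ∧ ∀ z ∈ P, ‖z.2 - y₀‖ ≤ L * ‖z.1 - x₀‖ := by
  obtain ⟨k, f, c, rfl⟩ := hP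
  have hfib : ∀ v : F, ((0 : E), v) ∈ polyhedralTangentCone f c (x₀, y₀) → v = 0 := by
    intro v hv
    obtain ⟨t, ht, hmem⟩ := exists_pos_add_smul_mem_of_mem_polyhedralTangentCone h₀ hv
    have hy : y₀ + t • v = y₀ := hfiber _ (by simpa using hmem)
    simpa [ht.ne'] using hy
  obtain ⟨L, hL, hbound⟩ := exists_norm_snd_le_mul_norm_fst (isClosed_polyhedralTangentCone _)
    (fun _ hd _ ht => smul_mem_polyhedralTangentCone hd ht) hfib
  exact ⟨L, hL, fun z hz => hbound _ (sub_mem_polyhedralTangentCone hz)⟩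

theorem IsPolyhedron.eventually_norm_sub_le {P : Set (E × F)} (hP : IsPolyhedron P) {x₀ : E}
    {y₀ : F} (hfiber : ∀ y, (x₀, y) ∈ P → y = y₀) :
    ∃ L : ℝ, 0 ≤ L ∧ ∀ᶠ x in 𝓝 x₀, ∀ y, (x, y) ∈ P → ‖y - y₀‖ ≤ L * ‖x - x₀‖ := by
  by_cases h₀ : (x₀, y₀) ∈ P
  · obtain ⟨L, hL, hbound⟩ := hP.exists_norm_snd_sub_le h₀ hfiber
    exact ⟨L, hL, .of_forall fun x y hxy => hbound (x, y) hxy⟩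
  · have hx₀ : x₀ ∉ Prod.fst '' P := by
      rintro ⟨⟨x, y⟩, hxy, rfl⟩
      exact h₀ (hfiber y hxy ▸ hxy)
    refine ⟨0, le_rfl, ?_⟩
    filter_upwards [hP.image_fst.isClosed.isOpen_compl.mem_nhds hx₀] with x hx y hxy
    exact absurd ⟨(x, y), hxy, rfl⟩ hx

end LocalBound

/-- Robinson: Let `S : ℝⁿ ⇉ ℝᵐ` be a polyhedral multifunction (its graph
is a finite union of convex polyhedra). If `S(x₀)` is a singleton, then `S` is Lipschitz
continuous at `x₀`: there exist `a ≥ 0` and a neighborhood `U` of `x₀` such that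
`S(x) ⊆ S(x₀) + a‖x − x₀‖B` for all `x ∈ U`. -/
theorem stmt17 (n m : ℕ)
    (S : EuclideanSpace ℝ (Fin n) → Set (EuclideanSpace ℝ (Fin m)))
    (hpoly : ∃ (k : ℕ)
      (P : Fin k → Set (EuclideanSpace ℝ (Fin n) × EuclideanSpace ℝ (Fin m))),
      (∀ i, IsPolyhedron (P i)) ∧
      {p : EuclideanSpace ℝ (Fin n) × EuclideanSpace ℝ (Fin m) | p.2 ∈ S p.1} = ⋃ i, P i)
    (x₀ : EuclideanSpace ℝ (Fin n)) (y₀ : EuclideanSpace ℝ (Fin m))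
    (hsingle : S x₀ = {y₀}) :
    ∃ a : ℝ, 0 ≤ a ∧ ∃ U ∈ nhds x₀, ∀ x ∈ U, ∀ y ∈ S x,
      ∃ y' ∈ S x₀, ‖y - y'‖ ≤ a * ‖x - x₀‖ := by
  obtain ⟨k, P, hP, hgraph⟩ := hpoly
  have hS : ∀ x y, y ∈ S x ↔ ∃ i, (x, y) ∈ P i := fun x y => by
    simpa using Set.ext_iff.1 hgraph (x, y)
  have hfiber : ∀ i y, (x₀, y) ∈ P i → y = y₀ := fun i y hy => by
    simpa [hsingle] using (hS x₀ y).2 ⟨i, hy⟩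
  choose L hL hbound using fun i => (hP i).eventually_norm_sub_le (hfiber i)
  refine ⟨∑ i, L i, Finset.sum_nonneg fun i _ => hL i, _, eventually_all.2 hbound, ?_⟩
  intro x hx y hy
  obtain ⟨i, hi⟩ := (hS x y).1 hy
  refine ⟨y₀, by simp [hsingle], (hx i y hi).trans ?_⟩
  gcongr
  exact Finset.single_le_sum (fun j _ => hL j) (Finset.mem_univ i)
end
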